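/- The map η: S⁵ → SU(3) defined by η(z) = z·zᵗ + M(conj z) is injective, where S⁵ is the unit sphere in ℂ³. -/
import Mathlib


/-- Skew-symmetric 3×3 matrix with M₁₂ = −w₃, M₁₃ = w₂, M₂₃ = −w₁. -/
def skewM (w : Fin 3 → ℂ) : Matrix (Fin 3) (Fin 3) ℂ :=
  !![0, -w 2, w 1; w 2, 0, -w 0; -w 1, w 0, 0]

/-- η(z) = z·zᵗ + M(conj z). -/
def eta (z : Fin 3 → ℂ) : Matrix (Fin 3) (Fin 3) ℂ :=
  Matrix.of (fun i j => z i * z j) + skewM (fun i => star (z i))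

theorem eta_injective_on_sphere :
    Set.InjOn eta {z : Fin 3 → ℂ | ∑ i, ‖z i‖ ^ 2 = 1} := by
  intro z _ w _ h
  have e : ∀ i j, eta z i j = eta w i j := fun i j => by rw [h]
  have h01 := e 0 1
  have h10 := e 1 0
  have h12 := e 1 2
  have h21 := e 2 1
  have h02 := e 0 2
  have h20 := e 2 0
  simp only [eta, skewM, Matrix.add_apply, Matrix.of_apply, Matrix.cons_val',
    Matrix.cons_val_zero, Matrix.cons_val_one, Matrix.head_cons, Matrix.empty_val',
    Matrix.cons_val_fin_one, Matrix.head_fin_const, Matrix.cons_val_two, Matrix.tail_cons,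
    RCLike.star_def] at h01 h10 h12 h21 h02 h20
  have k0 : (starRingEnd ℂ) (z 0) = (starRingEnd ℂ) (w 0) := by linear_combination (h21 - h12) / 2
  have k1 : (starRingEnd ℂ) (z 1) = (starRingEnd ℂ) (w 1) := by linear_combination (h02 - h20) / 2
  have k2 : (starRingEnd ℂ) (z 2) = (starRingEnd ℂ) (w 2) := by linear_combination (h10 - h01) / 2
  funext i
  fin_cases i
  · exact (starRingEnd ℂ).injective k0
  · exact (starRingEnd ℂ).injective k1
  · exact (starRingEnd ℂ).injective k2
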